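/- Let D[1](λ) be the one-fold Darboux/Bäcklund matrix at x = 0 built from λ₁ = ξ + iη and a nowhere-vanishing solution ψ₁ = (μ,ν)ᵀ: D[1] = λI + M where M₁₁ = -ξ - iη(|μ|²-|ν|²)/(|μ|²+|ν|²), M₂₂ = -ξ + iη(|μ|²-|ν|²)/(|μ|²+|ν|²), M₁₂ = -2iημν*/(|μ|²+|ν|²), M₂₁ = -2iημ*ν/(|μ|²+|ν|²). Define the transform u₁ = u - 2ημν*/(|μ|²+|ν|²). Then applying the analogous transform built from the same λ₁ and the orthogonal vector ψ₂ = (-k₁ν*, k₁μ*)ᵀ (k₁ ∈ ℂ, k₁ ≠ 0) recovers u: u₂ = u₁ + 2ημν*/(|μ|²+|ν|²) = u. That is, the Bäcklund transformation 𝓑ᵗ_{λ₁}(ψ₁) has a left inverse 𝓑ᵗ_{λ₁}(ψ₂). -/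

import Mathlib

open Complex

/-- The Bäcklund transformation built from ψ₁ = (μ,ν)ᵀ is undone by the transformation
built from the orthogonal vector ψ₂ = (-k₁ν*, k₁μ*)ᵀ: u₂ = u₁ + 2ημν*/(|μ|²+|ν|²) = u. -/
theorem backlund_left_inverse (ξ η : ℝ) (hη : η ≠ 0) (μ ν k₁ u : ℂ)
    (hpos : 0 < ‖μ‖ ^ 2 + ‖ν‖ ^ 2) (hk : k₁ ≠ 0) :
    (u - ((2 * η : ℝ) : ℂ) * μ * starRingEnd ℂ ν /
        ((‖μ‖ ^ 2 + ‖ν‖ ^ 2 : ℝ) : ℂ)) -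
      ((2 * η : ℝ) : ℂ) * ((-k₁ * starRingEnd ℂ ν) * starRingEnd ℂ (k₁ * starRingEnd ℂ μ)) /
        ((‖(-k₁ * starRingEnd ℂ ν)‖ ^ 2 +
          ‖(k₁ * starRingEnd ℂ μ)‖ ^ 2 : ℝ) : ℂ) = u := by
  have h1 : (‖μ‖ ^ 2 + ‖ν‖ ^ 2 : ℝ) ≠ 0 := ne_of_gt hpos
  have h1' : ((‖μ‖ ^ 2 + ‖ν‖ ^ 2 : ℝ) : ℂ) ≠ 0 := by exact_mod_cast h1
  have hk2 : ‖k₁‖ ^ 2 ≠ 0 := pow_ne_zero _ (norm_ne_zero_iff.2 hk)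
  have habs : (‖(-k₁ * starRingEnd ℂ ν)‖ ^ 2 +
      ‖(k₁ * starRingEnd ℂ μ)‖ ^ 2 : ℝ)
      = ‖k₁‖ ^ 2 * (‖μ‖ ^ 2 + ‖ν‖ ^ 2) := by
    simp [map_mul, mul_pow]; ring
  have h2' : ((‖(-k₁ * starRingEnd ℂ ν)‖ ^ 2 +
      ‖(k₁ * starRingEnd ℂ μ)‖ ^ 2 : ℝ) : ℂ) ≠ 0 := by
    rw [habs]; exact_mod_cast mul_ne_zero hk2 h1
  have hkk : (k₁ * starRingEnd ℂ k₁ : ℂ) = ((‖k₁‖ ^ 2 : ℝ) : ℂ) := by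
    rw [Complex.mul_conj]; simp [Complex.sq_norm]
  have key : ((2 * η : ℝ) : ℂ) * ((-k₁ * starRingEnd ℂ ν) * starRingEnd ℂ (k₁ * starRingEnd ℂ μ)) /
        ((‖(-k₁ * starRingEnd ℂ ν)‖ ^ 2 +
          ‖(k₁ * starRingEnd ℂ μ)‖ ^ 2 : ℝ) : ℂ)
      = -(((2 * η : ℝ) : ℂ) * μ * starRingEnd ℂ ν /
        ((‖μ‖ ^ 2 + ‖ν‖ ^ 2 : ℝ) : ℂ)) := by
    push_cast at hkk
    have hk2c : ((‖k₁‖ : ℂ)) ^ 2 ≠ 0 := by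
      exact_mod_cast hk2
    have e1 : ((2 * η : ℝ) : ℂ) * ((-k₁ * starRingEnd ℂ ν) * starRingEnd ℂ (k₁ * starRingEnd ℂ μ))
        = (-(((2 * η : ℝ) : ℂ) * μ * starRingEnd ℂ ν)) * ((‖k₁‖ : ℂ) ^ 2) := by
      rw [map_mul, Complex.conj_conj]
      push_cast
      linear_combination (-(2 * (η : ℂ)) * μ * starRingEnd ℂ ν) * hkk
    have e2 : ((‖k₁‖ ^ 2 * (‖μ‖ ^ 2 + ‖ν‖ ^ 2) : ℝ) : ℂ)
        = ((‖μ‖ ^ 2 + ‖ν‖ ^ 2 : ℝ) : ℂ) * ((‖k₁‖ : ℂ) ^ 2) := by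
      push_cast; ring
    rw [habs, e1, e2, mul_div_mul_right _ _ hk2c, neg_div]
  rw [key]
  ring
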